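/- Fix nonnegative integers m, n and an integer k with 0 ≤ k ≤ m. The generating function, by total weight |α|+|β|, over pairs (α,β) where α is a strictly decreasing sequence of integers in [1,m], β is a strictly decreasing sequence of integers in [0,n] (i.e., β may end with a part 0), and length(α) − length(β) = k, equals q^{binom(k+1,2)} · [m+n+1 choose n+k+1]_q as a formal power series (in fact polynomial) in q. -/

import Mathlib

open Finset

/-- The q-shifted factorial `(q;q)_r = ∏_{i=1}^r (1 - q^i)` in `ℚ(q)`. -/
noncomputable def qPoch (r : ℕ) : RatFunc ℚ :=
  ∏ i ∈ Finset.range r, (1 - (RatFunc.X : RatFunc ℚ) ^ (i + 1))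

/-- The Gaussian binomial coefficient `[a choose b]_q`, zero outside `0 ≤ b ≤ a`. -/
noncomputable def qbinom (a : ℕ) (b : ℤ) : RatFunc ℚ :=
  if 0 ≤ b ∧ b ≤ (a : ℤ) then qPoch a / (qPoch b.toNat * qPoch (a - b.toNat)) else 0

/-!
Encode a pair `(A, B)` with `A ⊆ [1, m]`, `B ⊆ [0, n]` by the set
`S = (A + n) ∪ {n - x : x ∈ [0, n] \ B} ⊆ [0, m + n]`: the shifted copy of `A` sits above `n`,
the reflected complement of `B` inside `[0, n]`. This is a bijection, `|S| = |A| + n + 1 - |B|`,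
so discrepancy `k` corresponds to `|S| = n + k + 1`, and `ΣS = ΣA + ΣB + C(n+1, 2) + n k`.
The `K`-subsets of `[0, N)` have generating function `q^C(K, 2) [N choose K]_q` by the q-Pascal
rule, and `C(n+k+1, 2) = C(k+1, 2) + C(n+1, 2) + n k` accounts for the prefactor.
-/

local notation "q" => (RatFunc.X : RatFunc ℚ)

lemma one_sub_X_pow_succ_ne_zero (i : ℕ) : 1 - q ^ (i + 1) ≠ 0 := by
  have h : (Polynomial.X ^ (i + 1) : Polynomial ℚ) ≠ 1 := fun h => by
    simpa using congrArg Polynomial.natDegree h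
  rw [sub_ne_zero, ne_comm, ← RatFunc.algebraMap_X, ← map_pow,
    ← map_one (algebraMap (Polynomial ℚ) (RatFunc ℚ))]
  exact (RatFunc.algebraMap_injective ℚ).ne h

lemma qPoch_ne_zero (r : ℕ) : qPoch r ≠ 0 :=
  prod_ne_zero_iff.2 fun i _ => one_sub_X_pow_succ_ne_zero i

lemma qPoch_zero : qPoch 0 = 1 :=
  prod_range_zero _

lemma qPoch_succ (r : ℕ) : qPoch (r + 1) = qPoch r * (1 - q ^ (r + 1)) :=
  prod_range_succ _ r

lemma qbinom_of_add_eq {a b c : ℕ} (h : a + b = c) :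
    qbinom c a = qPoch c / (qPoch a * qPoch b) := by
  rw [qbinom, if_pos (by omega), Int.toNat_natCast, ← h, Nat.add_sub_cancel_left]

lemma qbinom_zero_right (a : ℕ) : qbinom a 0 = 1 := by
  rw [← Nat.cast_zero, qbinom_of_add_eq (zero_add a), qPoch_zero, one_mul,
    div_self (qPoch_ne_zero a)]

lemma qbinom_self (a : ℕ) : qbinom a a = 1 := by
  rw [qbinom_of_add_eq (add_zero a), qPoch_zero, mul_one, div_self (qPoch_ne_zero a)]

lemma qbinom_of_lt {a : ℕ} {b : ℤ} (h : (a : ℤ) < b) : qbinom a b = 0 :=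
  if_neg (by omega)

lemma qbinom_pascal (a d : ℕ) :
    qbinom (a + d + 1) (a + 1 : ℕ) = qbinom (a + d) (a + 1 : ℕ) + q ^ d * qbinom (a + d) a := by
  rcases d with _ | e
  · rw [qbinom_of_lt (a := a + 0) (by omega), add_zero, qbinom_self, qbinom_self]
    ring
  · rw [qbinom_of_add_eq (b := e + 1) (by ring), qbinom_of_add_eq (b := e) (by ring),
      qbinom_of_add_eq rfl, show a + (e + 1) = a + e + 1 by ring]
    simp only [qPoch_succ]
    have := qPoch_ne_zero a
    have := qPoch_ne_zero e
    have := one_sub_X_pow_succ_ne_zero a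
    have := one_sub_X_pow_succ_ne_zero e
    field_simp
    ring

lemma Finset.sum_powersetCard_succ_insert {α M : Type*} [DecidableEq α] [AddCommMonoid M]
    {s : Finset α} {a : α} (ha : a ∉ s) (n : ℕ) (f : Finset α → M) :
    ∑ t ∈ powersetCard (n + 1) (insert a s), f t =
      ∑ t ∈ powersetCard (n + 1) s, f t + ∑ t ∈ powersetCard n s, f (insert a t) := by
  rw [powersetCard_succ_insert ha, sum_union, sum_image]
  · exact insert_erase_invOn.2.injOn.mono fun t ht => notMem_mono (mem_powersetCard.1 ht).1 ha
  · aesop (add simp [disjoint_left, insert_subset_iff])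

theorem sum_powersetCard_range_X_pow (N K : ℕ) :
    ∑ S ∈ (range N).powersetCard K, q ^ S.sum id = q ^ K.choose 2 * qbinom N K := by
  induction N generalizing K with
  | zero =>
    rcases K with _ | K
    · simp [qbinom_zero_right]
    · rw [powersetCard_eq_empty.2 (by simp), sum_empty, qbinom_of_lt (by omega), mul_zero]
  | succ N ih =>
    rcases K with _ | K
    · simp [qbinom_zero_right]
    have h_insert : ∀ S ∈ (range N).powersetCard K,
        q ^ (insert N S).sum id = q ^ N * q ^ S.sum id := fun S hS => by
        rw [sum_insert fun h => notMem_range_self ((mem_powersetCard.1 hS).1 h), pow_add, id]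
    rw [range_add_one, sum_powersetCard_succ_insert notMem_range_self, sum_congr rfl h_insert,
      ← mul_sum, ih, ih]
    rcases le_or_gt K N with hKN | hNK
    · obtain ⟨d, rfl⟩ := Nat.exists_eq_add_of_le hKN
      rw [qbinom_pascal, Nat.choose_succ_succ', Nat.choose_one_right]
      ring
    · rw [qbinom_of_lt (a := N) (b := K) (by omega), qbinom_of_lt (by omega),
        qbinom_of_lt (a := N + 1) (by omega)]
      ring

def reflectCompl (n : ℕ) (B : Finset ℕ) : Finset ℕ :=
  (range (n + 1) \ B).image (n - ·)

section reflectCompl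

variable {n : ℕ} {B : Finset ℕ}

lemma mem_reflectCompl {x : ℕ} : x ∈ reflectCompl n B ↔ x ≤ n ∧ n - x ∉ B := by
  simp only [reflectCompl, mem_image, mem_sdiff, mem_range]
  constructor
  · rintro ⟨y, ⟨hy, hyB⟩, rfl⟩
    exact ⟨Nat.sub_le n y, by rwa [Nat.sub_sub_self (by omega)]⟩
  · rintro ⟨hx, hxB⟩
    exact ⟨n - x, ⟨by omega, hxB⟩, Nat.sub_sub_self hx⟩

lemma reflectCompl_subset_range : reflectCompl n B ⊆ range (n + 1) := fun _ hx =>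
  mem_range.2 (Nat.lt_succ_of_le (mem_reflectCompl.1 hx).1)

lemma reflectCompl_reflectCompl : reflectCompl n (reflectCompl n B) = B.filter (· ≤ n) := by
  ext x
  simp only [mem_reflectCompl, mem_filter, not_and, not_not]
  constructor
  · rintro ⟨hx, h⟩
    exact ⟨by simpa [Nat.sub_sub_self hx] using h (Nat.sub_le n x), hx⟩
  · rintro ⟨hxB, hx⟩
    exact ⟨hx, fun _ => by rwa [Nat.sub_sub_self hx]⟩

lemma injOn_sub_range : Set.InjOn (n - ·) (range (n + 1) : Set ℕ) := fun x hx y hy h => by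
  simp only [coe_range, Set.mem_Iio] at hx hy
  simp only at h
  omega

lemma card_reflectCompl (hB : B ⊆ range (n + 1)) : #(reflectCompl n B) + #B = n + 1 := by
  rw [reflectCompl, card_image_of_injOn (injOn_sub_range.mono (by simp)),
    card_sdiff_add_card_eq_card hB, card_range]

lemma sum_range_succ_id_eq_choose_two (n : ℕ) :
    ∑ x ∈ range (n + 1), x = (n + 1).choose 2 := by
  rw [sum_range_id, Nat.choose_two_right]

lemma sum_reflectCompl_add (hB : B ⊆ range (n + 1)) :
    (reflectCompl n B).sum id + n * #B = B.sum id + (n + 1).choose 2 := by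
  have h_image : (reflectCompl n B).sum id = ∑ x ∈ range (n + 1) \ B, (n - x) :=
    sum_image (injOn_sub_range.mono (by simp))
  have h_split :
      ∑ x ∈ range (n + 1) \ B, (n - x) + ∑ x ∈ B, (n - x) = (n + 1).choose 2 := by
    rw [sum_sdiff hB, ← sum_range_succ_id_eq_choose_two]
    simpa using sum_range_reflect (fun x => x) (n + 1)
  have h_pair : ∑ x ∈ B, (n - x) + B.sum id = n * #B := by
    rw [← sum_add_distrib, mul_comm, ← smul_eq_mul, ← sum_const]
    exact sum_congr rfl fun x hx =>
      Nat.sub_add_cancel (Nat.lt_succ_iff.1 (mem_range.1 (hB hx)))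
  omega

end reflectCompl

section shift

variable {n : ℕ} {A B S : Finset ℕ}

lemma mem_image_add_right_iff {x : ℕ} : x ∈ A.image (· + n) ↔ n ≤ x ∧ x - n ∈ A := by
  simp only [mem_image]
  constructor
  · rintro ⟨a, ha, rfl⟩
    simpa using ha
  · rintro ⟨hx, hxA⟩
    exact ⟨x - n, hxA, Nat.sub_add_cancel hx⟩

lemma mem_image_sub_filter_lt {x : ℕ} :
    x ∈ (S.filter (n < ·)).image (· - n) ↔ 0 < x ∧ x + n ∈ S := by
  simp only [mem_image, mem_filter]
  constructor
  · rintro ⟨s, ⟨hs, hns⟩, rfl⟩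
    exact ⟨by omega, by rwa [Nat.sub_add_cancel hns.le]⟩
  · rintro ⟨hx, hxS⟩
    exact ⟨x + n, ⟨hxS, by omega⟩, by simp⟩

lemma disjoint_image_add_reflectCompl (hA : ∀ a ∈ A, 0 < a) :
    Disjoint (A.image (· + n)) (reflectCompl n B) := by
  simp only [disjoint_left, mem_image, mem_reflectCompl]
  rintro _ ⟨a, ha, rfl⟩ ⟨h, -⟩
  have := hA a ha
  omega

lemma card_image_add_union_reflectCompl (hA : ∀ a ∈ A, 0 < a) (hB : B ⊆ range (n + 1)) :
    #(A.image (· + n) ∪ reflectCompl n B) + #B = #A + n + 1 := by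
  rw [card_union_of_disjoint (disjoint_image_add_reflectCompl hA), add_assoc,
    card_reflectCompl hB, card_image_of_injective _ (add_left_injective n), add_assoc]

lemma sum_image_add_union_reflectCompl (hA : ∀ a ∈ A, 0 < a) (hB : B ⊆ range (n + 1)) :
    (A.image (· + n) ∪ reflectCompl n B).sum id + n * #B =
      A.sum id + n * #A + B.sum id + (n + 1).choose 2 := by
  have h_shift : (A.image (· + n)).sum id = A.sum id + n * #A := by
    rw [sum_image fun a _ b _ h => add_right_cancel h, mul_comm, ← smul_eq_mul, ← sum_const,
      ← sum_add_distrib]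
    rfl
  rw [sum_union (disjoint_image_add_reflectCompl hA), add_assoc, sum_reflectCompl_add hB, h_shift]
  ring

lemma image_sub_filter_image_add_union (hA : ∀ a ∈ A, 0 < a) :
    ((A.image (· + n) ∪ reflectCompl n B).filter (n < ·)).image (· - n) = A := by
  ext x
  simp only [mem_image_sub_filter_lt, mem_union, mem_image_add_right_iff, mem_reflectCompl]
  constructor
  · rintro ⟨hx, ⟨-, h⟩ | ⟨h, -⟩⟩
    · simpa using h
    · omega
  · intro hx
    exact ⟨hA x hx, Or.inl ⟨by omega, by simpa using hx⟩⟩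

lemma reflectCompl_image_add_union (hA : ∀ a ∈ A, 0 < a) (hB : B ⊆ range (n + 1)) :
    reflectCompl n (A.image (· + n) ∪ reflectCompl n B) = B := by
  ext x
  simp only [mem_reflectCompl, mem_union, mem_image_add_right_iff, not_or, not_and, not_not]
  constructor
  · rintro ⟨hx, -, h⟩
    simpa [Nat.sub_sub_self hx] using h (Nat.sub_le n x)
  · intro hx
    have hxn : x ≤ n := Nat.lt_succ_iff.1 (mem_range.1 (hB hx))
    exact ⟨hxn, fun _ h => (hA _ h).ne' (by omega), fun _ => by rwa [Nat.sub_sub_self hxn]⟩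

lemma image_add_image_sub_union_reflectCompl :
    ((S.filter (n < ·)).image (· - n)).image (· + n) ∪ reflectCompl n (reflectCompl n S) =
      S := by
  ext x
  rw [reflectCompl_reflectCompl, mem_union, mem_image_add_right_iff, mem_image_sub_filter_lt,
    mem_filter]
  constructor
  · rintro (⟨hx, -, h⟩ | ⟨h, -⟩)
    · rwa [Nat.sub_add_cancel hx] at h
    · exact h
  · intro h
    by_cases hx : n < x
    · exact Or.inl ⟨hx.le, by omega, by rwa [Nat.sub_add_cancel hx.le]⟩
    · exact Or.inr ⟨h, by omega⟩

end shift

lemma Nat.add_choose_two (a b : ℕ) : (a + b).choose 2 = a.choose 2 + a * b + b.choose 2 := by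
  rw [Nat.add_choose_eq]
  simp [Finset.Nat.antidiagonal_succ]
  ring

section synchronized

variable {m n k : ℕ} {A B S : Finset ℕ}

lemma pos_of_subset_Icc_one (hA : A ⊆ Icc 1 m) : ∀ a ∈ A, 0 < a := fun _ ha =>
  (mem_Icc.1 (hA ha)).1

lemma image_add_union_reflectCompl_mem_powersetCard (hA : A ⊆ Icc 1 m)
    (hB : B ⊆ range (n + 1)) (hcard : #A = #B + k) :
    A.image (· + n) ∪ reflectCompl n B ∈ (range (m + n + 1)).powersetCard (n + k + 1) := by
  have h_card := card_image_add_union_reflectCompl (pos_of_subset_Icc_one hA) hB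
  refine mem_powersetCard.2 ⟨union_subset ?_ (reflectCompl_subset_range.trans ?_), by omega⟩
  · intro x hx
    obtain ⟨a, ha, rfl⟩ := mem_image.1 hx
    have := (mem_Icc.1 (hA ha)).2
    exact mem_range.2 (by omega)
  · exact range_subset_range.2 (by omega)

lemma image_sub_filter_lt_subset_Icc (hS : S ⊆ range (m + n + 1)) :
    (S.filter (n < ·)).image (· - n) ⊆ Icc 1 m := fun a ha => by
  obtain ⟨hpos, haS⟩ := mem_image_sub_filter_lt.1 ha
  have := mem_range.1 (hS haS)
  exact mem_Icc.2 ⟨hpos, by omega⟩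

lemma card_image_sub_filter_lt (hcard : #S = n + k + 1) :
    #((S.filter (n < ·)).image (· - n)) = #(reflectCompl n S) + k := by
  have h_card := card_image_add_union_reflectCompl (A := (S.filter (n < ·)).image (· - n))
    (fun a ha => (mem_image_sub_filter_lt.1 ha).1) (reflectCompl_subset_range (n := n) (B := S))
  rw [image_add_image_sub_union_reflectCompl] at h_card
  omega

theorem sum_synchronized_eq_sum_powersetCard {M : Type*} [AddCommMonoid M] (f : ℕ → M) :
    ∑ P ∈ ((Icc 1 m).powerset ×ˢ (Icc 0 n).powerset).filter (fun P => #P.1 = #P.2 + k),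
        f (P.1.sum id + P.2.sum id + ((n + 1).choose 2 + n * k)) =
      ∑ S ∈ (range (m + n + 1)).powersetCard (n + k + 1), f (S.sum id) := by
  rw [← Nat.range_succ_eq_Icc_zero]
  refine sum_nbij' (fun P => P.1.image (· + n) ∪ reflectCompl n P.2)
    (fun S => ((S.filter (n < ·)).image (· - n), reflectCompl n S)) ?_ ?_ ?_ ?_ ?_ <;>
    simp only [mem_filter, mem_product, mem_powerset, mem_powersetCard]
  · rintro ⟨A, B⟩ ⟨⟨hA, hB⟩, hcard⟩
    exact mem_powersetCard.1 (image_add_union_reflectCompl_mem_powersetCard hA hB hcard)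
  · rintro S ⟨hS, hcard⟩
    exact ⟨⟨image_sub_filter_lt_subset_Icc hS, reflectCompl_subset_range⟩,
      card_image_sub_filter_lt hcard⟩
  · rintro ⟨A, B⟩ ⟨⟨hA, hB⟩, -⟩
    have hA := pos_of_subset_Icc_one hA
    exact Prod.ext (image_sub_filter_image_add_union hA) (reflectCompl_image_add_union hA hB)
  · intro S _
    exact image_add_image_sub_union_reflectCompl
  · rintro ⟨A, B⟩ ⟨⟨hA, hB⟩, hcard⟩
    have h_sum := sum_image_add_union_reflectCompl (pos_of_subset_Icc_one hA) hB
    rw [hcard, mul_add] at h_sum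
    dsimp only at h_sum ⊢
    congr 1
    omega

end synchronized

theorem synchronized_nonneg_discrepancy_gf_general (m n k : ℕ) :
    ∑ P ∈ ((Finset.Icc 1 m).powerset ×ˢ (Finset.Icc 0 n).powerset).filter
        (fun P => P.1.card = P.2.card + k),
      (RatFunc.X : RatFunc ℚ) ^ (P.1.sum id + P.2.sum id) =
      (RatFunc.X : RatFunc ℚ) ^ (k * (k + 1) / 2) * qbinom (m + n + 1) ((n : ℤ) + k + 1) := by
  have h_exp : (n + k + 1).choose 2 = k * (k + 1) / 2 + ((n + 1).choose 2 + n * k) := by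
    have h_tri : k * (k + 1) / 2 = (k + 1).choose 2 := by
      rw [Nat.choose_two_right, Nat.add_sub_cancel, mul_comm]
    rw [h_tri, add_right_comm, Nat.add_choose_two, Nat.choose_succ_succ' k 1, Nat.choose_one_right]
    ring
  refine mul_right_cancel₀ (pow_ne_zero ((n + 1).choose 2 + n * k) RatFunc.X_ne_zero) ?_
  simp_rw [sum_mul, ← pow_add]
  rw [sum_synchronized_eq_sum_powersetCard (q ^ ·), sum_powersetCard_range_X_pow, h_exp,
    pow_add]
  push_cast
  ring

/-- The generating function for synchronized partitions in `𝒮_{m,n}` with nonnegative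
discrepancy `k`: pairs `(α,β)` of strictly decreasing sequences, encoded as finsets
`A ⊆ [1,m]` and `B ⊆ [0,n]` (the part 0 is allowed in `β`), with
`card A = card B + k`, weighted by `q^{|A|+|B|}`. -/
theorem synchronized_nonneg_discrepancy_gf (m n k : ℕ) (hk : k ≤ m) :
    ∑ P ∈ ((Finset.Icc 1 m).powerset ×ˢ (Finset.Icc 0 n).powerset).filter
        (fun P => P.1.card = P.2.card + k),
      (RatFunc.X : RatFunc ℚ) ^ (P.1.sum id + P.2.sum id) =
      (RatFunc.X : RatFunc ℚ) ^ (k * (k + 1) / 2) * qbinom (m + n + 1) ((n : ℤ) + k + 1) :=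
  synchronized_nonneg_discrepancy_gf_general m n k
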